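/- arXiv:1707.09592 — 2 statements merged into one kernel-verified Lean document; each statement's English description precedes it below -/
import Mathlib

section
/- Suppose I0 and I1 are differentiable at 0 with I0′(0) = −I1′(0). Then for every z ∈ (0, D_min), both h0(z) ≥ 2C − z and h1(z) ≥ 2C − z; consequently, for all integers m > 2n ≥ 0 with n ≥ 1, h((m−2n)·C) ≥ m·C. -/
open MeasureTheory Filter Set ENNReal

noncomputable section

/-- The log-likelihood ratio `λ(y) = log (dμ/dν)(y)`. -/
def llr' (μ ν : Measure ℝ) (y : ℝ) : ℝ := Real.log ((μ.rnDeriv ν y).toReal)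

/-- `M0(w) = ∫ exp(w λ(y)) dν(y)` as a value in `[0,∞]`. -/
def M0 (μ ν : Measure ℝ) (w : ℝ) : ℝ≥0∞ :=
  ∫⁻ y, ENNReal.ofReal (Real.exp (w * llr' μ ν y)) ∂ν

/-- `M1(w) = ∫ exp(w λ(y)) dμ(y)` as a value in `[0,∞]`. -/
def M1 (μ ν : Measure ℝ) (w : ℝ) : ℝ≥0∞ :=
  ∫⁻ y, ENNReal.ofReal (Real.exp (w * llr' μ ν y)) ∂μ

/-- `dom0 = {w : M0(w) < ∞}`. -/
def dom0 (μ ν : Measure ℝ) : Set ℝ := {w | M0 μ ν w < ⊤}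

/-- `dom1 = {w : M1(w) < ∞}`. -/
def dom1 (μ ν : Measure ℝ) : Set ℝ := {w | M1 μ ν w < ⊤}

/-- The cumulant generating function `log M0`. -/
def logM0 (μ ν : Measure ℝ) (w : ℝ) : ℝ := Real.log ((M0 μ ν w).toReal)

/-- The cumulant generating function `log M1`. -/
def logM1 (μ ν : Measure ℝ) (w : ℝ) : ℝ := Real.log ((M1 μ ν w).toReal)

/-- Fenchel–Legendre transform of `log M0`. -/
def I0 (μ ν : Measure ℝ) (x : ℝ) : ℝ := ⨆ w : ℝ, (x * w - logM0 μ ν w)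

/-- Fenchel–Legendre transform of `log M1`. -/
def I1 (μ ν : Measure ℝ) (x : ℝ) : ℝ := ⨆ w : ℝ, (x * w - logM1 μ ν w)

/-- Kullback–Leibler divergence `D(1‖0) = ∫ λ dμ`. -/
def D10 (μ ν : Measure ℝ) : ℝ := ∫ y, llr' μ ν y ∂μ

/-- Kullback–Leibler divergence `D(0‖1) = -∫ λ dν`. -/
def D01 (μ ν : Measure ℝ) : ℝ := -∫ y, llr' μ ν y ∂ν

/-- `C = I0(0)`. -/
def Cconst (μ ν : Measure ℝ) : ℝ := I0 μ ν 0

/-- `D_min = min{D(0‖1), D(1‖0)}`. -/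
def Dmin (μ ν : Measure ℝ) : ℝ := min (D01 μ ν) (D10 μ ν)

/-- `I0⁻¹(z) = max {x : I0(x) = z}`. -/
def I0inv (μ ν : Measure ℝ) (z : ℝ) : ℝ := sSup {x : ℝ | I0 μ ν x = z}

/-- `I1⁻¹(z) = min {x : I1(x) = z}`. -/
def I1inv (μ ν : Measure ℝ) (z : ℝ) : ℝ := sInf {x : ℝ | I1 μ ν x = z}

/-- `h0(z) = I0(I1⁻¹(z))`. -/
def h0 (μ ν : Measure ℝ) (z : ℝ) : ℝ := I0 μ ν (I1inv μ ν z)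

/-- `h1(z) = I1(I0⁻¹(z))`. -/
def h1 (μ ν : Measure ℝ) (z : ℝ) : ℝ := I1 μ ν (I0inv μ ν z)

/-- `h(z) = (m−n)·min{h0(z/(m−n)), h1(z/(m−n))}`. -/
def hFun (μ ν : Measure ℝ) (m n : ℕ) (z : ℝ) : ℝ :=
  ((m : ℝ) - n) * min (h0 μ ν (z / ((m : ℝ) - n))) (h1 μ ν (z / ((m : ℝ) - n)))

namespace Stmt14Aux

open Real Topology

variable {μ ν : Measure ℝ}

lemma meas_integrand (w : ℝ) :
    Measurable fun y => ENNReal.ofReal (Real.exp (w * llr' μ ν y)) :=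
  (((measurable_llr μ ν).const_mul w).exp).ennreal_ofReal

lemma M0_zero [IsProbabilityMeasure ν] : M0 μ ν 0 = 1 := by
  simp [M0]

lemma M1_eq_M0 [IsProbabilityMeasure μ] [SigmaFinite ν] (hμν : μ ≪ ν) (hνμ : ν ≪ μ) (w : ℝ) :
    M1 μ ν w = M0 μ ν (w + 1) := by
  rw [M1, M0, ← lintegral_rnDeriv_mul hμν (meas_integrand w).aemeasurable]
  refine lintegral_congr_ae ?_
  filter_upwards [Measure.rnDeriv_lt_top μ ν, hνμ.ae_le (Measure.rnDeriv_pos hμν)]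
    with y htop hpos
  have h1 : μ.rnDeriv ν y = ENNReal.ofReal (Real.exp (llr' μ ν y)) := by
    rw [llr', Real.exp_log (ENNReal.toReal_pos hpos.ne' htop.ne)]
    exact (ENNReal.ofReal_toReal htop.ne).symm
  rw [h1, ← ENNReal.ofReal_mul (Real.exp_nonneg _), ← Real.exp_add]
  congr 2
  ring

lemma M0_one [IsProbabilityMeasure μ] [IsProbabilityMeasure ν]
    (hμν : μ ≪ ν) (hνμ : ν ≪ μ) : M0 μ ν 1 = 1 := by
  rw [show (1:ℝ) = 0 + 1 by ring, ← M1_eq_M0 hμν hνμ]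
  simp [M1]

lemma logM0_zero [IsProbabilityMeasure ν] : logM0 μ ν 0 = 0 := by
  rw [logM0, M0_zero]; simp

lemma logM0_one [IsProbabilityMeasure μ] [IsProbabilityMeasure ν]
    (hμν : μ ≪ ν) (hνμ : ν ≪ μ) : logM0 μ ν 1 = 0 := by
  rw [logM0, M0_one hμν hνμ]; simp

lemma logM1_shift [IsProbabilityMeasure μ] [SigmaFinite ν] (hμν : μ ≪ ν) (hνμ : ν ≪ μ) (w : ℝ) :
    logM1 μ ν w = logM0 μ ν (w + 1) := by
  rw [logM1, logM0, M1_eq_M0 hμν hνμ]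

lemma logM1_zero [IsProbabilityMeasure μ] [IsProbabilityMeasure ν]
    (hμν : μ ≪ ν) (hνμ : ν ≪ μ) : logM1 μ ν 0 = 0 := by
  rw [logM1_shift hμν hνμ, zero_add, logM0_one hμν hνμ]

lemma jensen_aux {ρ : Measure ℝ} [IsProbabilityMeasure ρ] {g : ℝ → ℝ} (hg : Measurable g)
    (hgi : Integrable g ρ) (hfin : ∫⁻ y, ENNReal.ofReal (Real.exp (g y)) ∂ρ ≠ ⊤) :
    ∫ y, g y ∂ρ ≤ Real.log ((∫⁻ y, ENNReal.ofReal (Real.exp (g y)) ∂ρ).toReal) := by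
  have hmeas : Measurable fun y => ENNReal.ofReal (Real.exp (g y)) := hg.exp.ennreal_ofReal
  have hint : Integrable (fun y => Real.exp (g y)) ρ := by
    have h := integrable_toReal_of_lintegral_ne_top hmeas.aemeasurable hfin
    refine h.congr (Filter.Eventually.of_forall fun y => ?_)
    show (ENNReal.ofReal (Real.exp (g y))).toReal = Real.exp (g y)
    exact ENNReal.toReal_ofReal (Real.exp_nonneg _)
  have heq : (∫⁻ y, ENNReal.ofReal (Real.exp (g y)) ∂ρ).toReal = ∫ y, Real.exp (g y) ∂ρ := by
    rw [← ofReal_integral_eq_lintegral_ofReal hint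
      (Filter.Eventually.of_forall fun y => Real.exp_nonneg _),
      ENNReal.toReal_ofReal (integral_nonneg fun y => Real.exp_nonneg _)]
  rw [heq]
  have hjen : Real.exp (∫ y, g y ∂ρ) ≤ ∫ y, Real.exp (g y) ∂ρ :=
    convexOn_exp.map_integral_le Real.continuous_exp.continuousOn isClosed_univ
      (Filter.Eventually.of_forall fun _ => Set.mem_univ _) hgi hint
  calc ∫ y, g y ∂ρ = Real.log (Real.exp (∫ y, g y ∂ρ)) := (Real.log_exp _).symm
    _ ≤ _ := Real.log_le_log (Real.exp_pos _) hjen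

lemma jensen_nu [IsProbabilityMeasure ν] (hInt0 : Integrable (llr' μ ν) ν) {w : ℝ}
    (hfin : M0 μ ν w ≠ ⊤) : -(w * D01 μ ν) ≤ logM0 μ ν w := by
  have h := jensen_aux (g := fun y => w * llr' μ ν y) ((measurable_llr μ ν).const_mul w)
    (hInt0.const_mul w) hfin
  rw [integral_const_mul] at h
  rw [logM0]
  calc -(w * D01 μ ν) = w * ∫ y, llr' μ ν y ∂ν := by rw [D01]; ring
    _ ≤ _ := h

lemma jensen_mu [IsProbabilityMeasure μ] (hInt1 : Integrable (llr' μ ν) μ) {w : ℝ}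
    (hfin : M1 μ ν w ≠ ⊤) : w * D10 μ ν ≤ logM1 μ ν w := by
  have h := jensen_aux (g := fun y => w * llr' μ ν y) ((measurable_llr μ ν).const_mul w)
    (hInt1.const_mul w) hfin
  rw [integral_const_mul] at h
  rw [logM1]
  calc w * D10 μ ν = w * ∫ y, llr' μ ν y ∂μ := by rw [D10]
    _ ≤ _ := h

lemma jensen_mu0 [IsProbabilityMeasure μ] [IsProbabilityMeasure ν]
    (hμν : μ ≪ ν) (hνμ : ν ≪ μ) (hInt1 : Integrable (llr' μ ν) μ) {w : ℝ}
    (hfin : M0 μ ν w ≠ ⊤) : (w - 1) * D10 μ ν ≤ logM0 μ ν w := by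
  have hfin' : M1 μ ν (w - 1) ≠ ⊤ := by
    rw [M1_eq_M0 hμν hνμ, sub_add_cancel]; exact hfin
  have h := jensen_mu hInt1 hfin'
  rwa [logM1_shift hμν hνμ, sub_add_cancel] at h

lemma M0_combo (μ ν : Measure ℝ) (a b θ : ℝ) (h0 : 0 ≤ θ) (h1 : θ ≤ 1) :
    M0 μ ν (θ*a + (1-θ)*b) ≤ ENNReal.ofReal θ * M0 μ ν a + ENNReal.ofReal (1-θ) * M0 μ ν b := by
  rw [M0, M0, M0, ← lintegral_const_mul _ (meas_integrand a),
    ← lintegral_const_mul _ (meas_integrand b),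
    ← lintegral_add_left ((meas_integrand a).const_mul _)]
  refine lintegral_mono fun y => ?_
  have h := convexOn_exp.2 (Set.mem_univ (a * llr' μ ν y)) (Set.mem_univ (b * llr' μ ν y))
    h0 (sub_nonneg.2 h1) (by ring : θ + (1 - θ) = 1)
  simp only [smul_eq_mul] at h
  calc ENNReal.ofReal (Real.exp ((θ*a + (1-θ)*b) * llr' μ ν y))
      ≤ ENNReal.ofReal (θ * Real.exp (a * llr' μ ν y) + (1-θ) * Real.exp (b * llr' μ ν y)) := by
        refine ENNReal.ofReal_le_ofReal ?_
        calc Real.exp ((θ*a + (1-θ)*b) * llr' μ ν y)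
            = Real.exp (θ * (a * llr' μ ν y) + (1-θ) * (b * llr' μ ν y)) := by congr 1; ring
          _ ≤ _ := h
    _ = ENNReal.ofReal θ * ENNReal.ofReal (Real.exp (a * llr' μ ν y))
        + ENNReal.ofReal (1-θ) * ENNReal.ofReal (Real.exp (b * llr' μ ν y)) := by
        rw [ENNReal.ofReal_add (mul_nonneg h0 (Real.exp_nonneg _))
          (mul_nonneg (by linarith) (Real.exp_nonneg _)), ENNReal.ofReal_mul h0,
          ENNReal.ofReal_mul (by linarith : (0:ℝ) ≤ 1 - θ)]

lemma M0_combo_ne_top {μ ν : Measure ℝ} {a b : ℝ} (θ : ℝ) (h0 : 0 ≤ θ) (h1 : θ ≤ 1)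
    (ha : M0 μ ν a ≠ ⊤) (hb : M0 μ ν b ≠ ⊤) : M0 μ ν (θ*a + (1-θ)*b) ≠ ⊤ := by
  refine ne_top_of_le_ne_top ?_ (M0_combo μ ν a b θ h0 h1)
  exact (ENNReal.add_lt_top.2 ⟨ENNReal.mul_lt_top ENNReal.ofReal_lt_top ha.lt_top,
    ENNReal.mul_lt_top ENNReal.ofReal_lt_top hb.lt_top⟩).ne

lemma sup_nonneg' {F : ℝ → ℝ} (hF : F 0 = 0) (x : ℝ) : 0 ≤ ⨆ w : ℝ, (x * w - F w) := by
  by_cases h : BddAbove (Set.range fun w : ℝ => x * w - F w)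
  · have h0 := le_ciSup h 0
    simpa [hF] using h0
  · rw [Real.iSup_of_not_bddAbove h]

lemma I0_nonneg [IsProbabilityMeasure ν] (x : ℝ) : 0 ≤ I0 μ ν x :=
  sup_nonneg' logM0_zero x

lemma I1_nonneg [IsProbabilityMeasure μ] [IsProbabilityMeasure ν]
    (hμν : μ ≪ ν) (hνμ : ν ≪ μ) (x : ℝ) : 0 ≤ I1 μ ν x :=
  sup_nonneg' (logM1_zero hμν hνμ) x

lemma convexOn_sup (F : ℝ → ℝ) :
    ConvexOn ℝ {x : ℝ | BddAbove (Set.range fun w : ℝ => x*w - F w)}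
      (fun x => ⨆ w : ℝ, (x*w - F w)) := by
  constructor
  · intro x hx y hy a b ha hb hab
    obtain ⟨Bx, hBx⟩ := hx
    obtain ⟨By, hBy⟩ := hy
    refine ⟨a*Bx + b*By, ?_⟩
    rintro r ⟨w, rfl⟩
    have h1 : x*w - F w ≤ Bx := hBx ⟨w, rfl⟩
    have h2 : y*w - F w ≤ By := hBy ⟨w, rfl⟩
    simp only [smul_eq_mul]
    have hkey : a*(x*w - F w) + b*(y*w - F w) = (a*x + b*y)*w - F w := by
      have hb1 : b = 1 - a := by linarith
      rw [hb1]; ring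
    nlinarith [mul_le_mul_of_nonneg_left h1 ha, mul_le_mul_of_nonneg_left h2 hb]
  · intro x hx y hy a b ha hb hab
    refine ciSup_le fun w => ?_
    have h1 : x*w - F w ≤ ⨆ w : ℝ, (x*w - F w) := le_ciSup hx w
    have h2 : y*w - F w ≤ ⨆ w : ℝ, (y*w - F w) := le_ciSup hy w
    simp only [smul_eq_mul]
    have hkey : a*(x*w - F w) + b*(y*w - F w) = (a*x + b*y)*w - F w := by
      have hb1 : b = 1 - a := by linarith
      rw [hb1]; ring
    nlinarith [mul_le_mul_of_nonneg_left h1 ha, mul_le_mul_of_nonneg_left h2 hb]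

lemma tangent_line {s : Set ℝ} {f : ℝ → ℝ} (hf : ConvexOn ℝ s f) (h0 : (0:ℝ) ∈ s)
    {x : ℝ} (hx : x ∈ s) {d : ℝ} (hd : HasDerivAt f d 0) : f 0 + d * x ≤ f x := by
  have hG : HasDerivAt (fun t : ℝ => f (t * x)) (d * x) 0 := by
    have hinner : HasDerivAt (fun t : ℝ => t * x) x 0 := hasDerivAt_mul_const x
    have houter : HasDerivAt f d ((fun t : ℝ => t * x) 0) := by simpa using hd
    exact houter.comp 0 hinner
  have hslope : Filter.Tendsto (slope (fun t : ℝ => f (t * x)) 0) (𝓝[≠] 0) (𝓝 (d * x)) :=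
    hasDerivAt_iff_tendsto_slope.mp hG
  have hslope' : Filter.Tendsto (slope (fun t : ℝ => f (t * x)) 0) (𝓝[>] 0) (𝓝 (d * x)) :=
    hslope.mono_left (nhdsWithin_mono 0 fun t ht => ne_of_gt ht)
  have hev : ∀ᶠ t in 𝓝[>] (0:ℝ), slope (fun t : ℝ => f (t * x)) 0 t ≤ f x - f 0 := by
    filter_upwards [Ioc_mem_nhdsGT (zero_lt_one : (0:ℝ) < 1)] with t ht
    have hconv := hf.2 hx h0 (le_of_lt ht.1) (sub_nonneg.2 ht.2) (by ring : t + (1 - t) = 1)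
    simp only [smul_eq_mul, mul_zero, add_zero] at hconv
    rw [slope_def_field, sub_zero, div_le_iff₀ ht.1]
    simp only [zero_mul]
    nlinarith [hconv]
  have hle := le_of_tendsto hslope' hev
  linarith

lemma range_shift [IsProbabilityMeasure μ] [SigmaFinite ν] (hμν : μ ≪ ν) (hνμ : ν ≪ μ) (x : ℝ) :
    (Set.range fun w : ℝ => x*w - logM1 μ ν w)
      = (fun r => r + (-x)) '' (Set.range fun w : ℝ => x*w - logM0 μ ν w) := by
  ext r
  constructor
  · rintro ⟨w, rfl⟩
    refine ⟨x*(w+1) - logM0 μ ν (w+1), ⟨w+1, rfl⟩, ?_⟩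
    show x*(w+1) - logM0 μ ν (w+1) + -x = x*w - logM1 μ ν w
    rw [logM1_shift hμν hνμ]; ring
  · rintro ⟨t, ⟨u, rfl⟩, rfl⟩
    refine ⟨u - 1, ?_⟩
    show x*(u-1) - logM1 μ ν (u-1) = (x*u - logM0 μ ν u) + -x
    rw [logM1_shift hμν hνμ, sub_add_cancel]; ring

lemma bddAbove_I1_iff [IsProbabilityMeasure μ] [SigmaFinite ν] (hμν : μ ≪ ν) (hνμ : ν ≪ μ)
    (x : ℝ) : BddAbove (Set.range fun w : ℝ => x*w - logM1 μ ν w)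
      ↔ BddAbove (Set.range fun w : ℝ => x*w - logM0 μ ν w) := by
  rw [range_shift hμν hνμ]
  exact (OrderIso.addRight (-x)).bddAbove_image

lemma I1_eq_I0_sub [IsProbabilityMeasure μ] [SigmaFinite ν] (hμν : μ ≪ ν) (hνμ : ν ≪ μ)
    {x : ℝ} (hb : BddAbove (Set.range fun w : ℝ => x*w - logM0 μ ν w)) :
    I1 μ ν x = I0 μ ν x - x := by
  rw [I1, I0, iSup, iSup, range_shift hμν hνμ]
  have h := (OrderIso.addRight (-x)).map_csSup'
    (Set.range_nonempty (fun w : ℝ => x*w - logM0 μ ν w)) hb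
  simp only [OrderIso.addRight_apply] at h
  rw [← h]
  ring

variable [IsProbabilityMeasure μ] [IsProbabilityMeasure ν]

lemma bdd_of_Icc (hμν : μ ≪ ν) (hνμ : ν ≪ μ)
    (hInt1 : Integrable (llr' μ ν) μ) (hInt0 : Integrable (llr' μ ν) ν)
    (hfin : ∀ w, M0 μ ν w ≠ ⊤) {x : ℝ}
    (hx : x ∈ Set.Icc (-(D01 μ ν)) (D10 μ ν)) :
    BddAbove (Set.range fun w : ℝ => x*w - logM0 μ ν w) := by
  refine ⟨max 0 (D10 μ ν), ?_⟩
  rintro r ⟨w, rfl⟩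
  rcases le_or_gt w 0 with hw | hw
  · have hJ := jensen_nu hInt0 (w := w) (hfin w)
    have hx1 := hx.1
    have : x*w - logM0 μ ν w ≤ 0 := by nlinarith
    exact this.trans (le_max_left _ _)
  · have hJ := jensen_mu0 hμν hνμ hInt1 (w := w) (hfin w)
    have hx2 := hx.2
    have : x*w - logM0 μ ν w ≤ D10 μ ν := by nlinarith
    exact this.trans (le_max_right _ _)

lemma I0_at_negD01 (hInt0 : Integrable (llr' μ ν) ν) (hfin : ∀ w, M0 μ ν w ≠ ⊤) :
    I0 μ ν (-(D01 μ ν)) = 0 := by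
  refine le_antisymm (ciSup_le fun w => ?_) (I0_nonneg _)
  have hJ := jensen_nu hInt0 (w := w) (hfin w)
  nlinarith

lemma I0_at_D10 (hμν : μ ≪ ν) (hνμ : ν ≪ μ)
    (hInt1 : Integrable (llr' μ ν) μ) (hInt0 : Integrable (llr' μ ν) ν)
    (hfin : ∀ w, M0 μ ν w ≠ ⊤) (hD01 : 0 < D01 μ ν) (hD10 : 0 < D10 μ ν) :
    I0 μ ν (D10 μ ν) = D10 μ ν := by
  refine le_antisymm (ciSup_le fun w => ?_) ?_
  · have hJ := jensen_mu0 hμν hνμ hInt1 (w := w) (hfin w)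
    nlinarith
  · have hb := bdd_of_Icc hμν hνμ hInt1 hInt0 hfin
      (Set.mem_Icc.2 ⟨by linarith, le_refl _⟩)
    have h1 := le_ciSup hb 1
    rw [logM0_one hμν hνμ] at h1
    simp at h1; exact h1

lemma C_le_Dmin (hμν : μ ≪ ν) (hνμ : ν ≪ μ)
    (hInt1 : Integrable (llr' μ ν) μ) (hInt0 : Integrable (llr' μ ν) ν)
    (hfin : ∀ w, M0 μ ν w ≠ ⊤) (hD01 : 0 < D01 μ ν) (hD10 : 0 < D10 μ ν) :
    Cconst μ ν ≤ Dmin μ ν := by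
  have h01 : Cconst μ ν ≤ D01 μ ν := by
    refine ciSup_le fun w => ?_
    rcases le_or_gt w 1 with hw | hw
    · have hJ := jensen_nu hInt0 (w := w) (hfin w)
      nlinarith
    · have hJ := jensen_mu0 hμν hνμ hInt1 (w := w) (hfin w)
      nlinarith
  have h10 : Cconst μ ν ≤ D10 μ ν := by
    refine ciSup_le fun w => ?_
    rcases le_or_gt w 0 with hw | hw
    · have hJ := jensen_nu hInt0 (w := w) (hfin w)
      nlinarith
    · have hJ := jensen_mu0 hμν hνμ hInt1 (w := w) (hfin w)
      nlinarith
  exact le_min h01 h10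

lemma logM0_of_top {w : ℝ} (h : M0 μ ν w = ⊤) : logM0 μ ν w = 0 := by
  rw [logM0, h]
  simp

lemma M0_fin_of_C_ne_zero (hμν : μ ≪ ν) (hνμ : ν ≪ μ) {d : ℝ}
    (hI0d : HasDerivAt (I0 μ ν) d 0) (hC : Cconst μ ν ≠ 0) (w : ℝ) : M0 μ ν w ≠ ⊤ := by
  intro htop
  apply hC
  have h0fin : M0 μ ν 0 ≠ ⊤ := by rw [M0_zero]; exact ENNReal.one_ne_top
  have h1fin : M0 μ ν 1 ≠ ⊤ := by rw [M0_one hμν hνμ]; exact ENNReal.one_ne_top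
  have hw01 : w < 0 ∨ 1 < w := by
    by_contra h
    push_neg at h
    obtain ⟨h1, h2⟩ := h
    have hne := M0_combo_ne_top (1 - w) (by linarith) (by linarith) h0fin h1fin
    rw [show (1 - w)*0 + (1 - (1 - w))*1 = w by ring] at hne
    exact hne htop
  rcases hw01 with hw | hw
  · -- all w' ≤ w have M0 = ⊤, hence I0 x = 0 for x < 0
    have hall : ∀ w', w' ≤ w → M0 μ ν w' = ⊤ := by
      intro w' hw'
      by_contra hfin
      -- w = θ*w' + (1-θ)*0 with θ = w/w' ∈ (0, 1]
      have hw'neg : w' < 0 := lt_of_le_of_lt hw' hw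
      have hθ1 : w / w' ≤ 1 := by
        rw [div_le_one_of_neg hw'neg]
        exact hw'
      have hθ0 : 0 ≤ w / w' := div_nonneg_of_nonpos hw.le hw'neg.le
      have := M0_combo_ne_top (μ := μ) (ν := ν) (a := w') (b := 0) (w / w') hθ0 hθ1 hfin h0fin
      rw [mul_zero, add_zero, div_mul_cancel₀ _ hw'neg.ne] at this
      exact this htop
    have hx0 : ∀ x : ℝ, x < 0 → I0 μ ν x = 0 := by
      intro x hx
      refine Real.iSup_of_not_bddAbove ?_
      rintro ⟨B, hB⟩
      have hw' : min w ((B+1)/x) ≤ w := min_le_left _ _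
      have hterm : x * min w ((B+1)/x) - logM0 μ ν (min w ((B+1)/x)) ≤ B :=
        hB ⟨min w ((B+1)/x), rfl⟩
      rw [logM0_of_top (hall _ hw')] at hterm
      have hxw : B + 1 ≤ x * min w ((B+1)/x) := by
        have h2 : min w ((B+1)/x) ≤ (B+1)/x := min_le_right _ _
        have h3 := mul_le_mul_of_nonpos_right h2 hx.le
        rw [div_mul_cancel₀ _ hx.ne] at h3
        rw [mul_comm]
        exact h3
      simp only [sub_zero] at hterm
      linarith
    have hcont : Filter.Tendsto (I0 μ ν) (𝓝[<] (0:ℝ)) (𝓝 (Cconst μ ν)) :=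
      (hI0d.continuousAt.continuousWithinAt : ContinuousWithinAt (I0 μ ν) (Set.Iio 0) 0)
    have hzero : Filter.Tendsto (I0 μ ν) (𝓝[<] (0:ℝ)) (𝓝 0) := by
      refine Filter.Tendsto.congr' ?_ tendsto_const_nhds
      filter_upwards [self_mem_nhdsWithin] with x hx
      exact (hx0 x hx).symm
    exact tendsto_nhds_unique hcont hzero
  · have hall : ∀ w', w ≤ w' → M0 μ ν w' = ⊤ := by
      intro w' hw'
      by_contra hfin
      have hw'1 : 1 < w' := lt_of_lt_of_le hw hw'
      -- w = θ*1 + (1-θ)*w' with θ = (w' - w)/(w' - 1) ∈ [0,1)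
      set θ := (w' - w)/(w' - 1) with hθ
      have hden : 0 < w' - 1 := by linarith
      have hθ0 : 0 ≤ θ := div_nonneg (by linarith) hden.le
      have hθ1 : θ ≤ 1 := by
        rw [hθ, div_le_one hden]
        linarith
      have := M0_combo_ne_top (μ := μ) (ν := ν) (a := 1) (b := w') θ hθ0 hθ1 h1fin hfin
      rw [mul_one] at this
      have harg : θ + (1 - θ) * w' = w := by
        rw [hθ]; linear_combination -(div_mul_cancel₀ (w' - w) hden.ne')
      rw [harg] at this
      exact this htop
    have hx0 : ∀ x : ℝ, 0 < x → I0 μ ν x = 0 := by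
      intro x hx
      refine Real.iSup_of_not_bddAbove ?_
      rintro ⟨B, hB⟩
      have hw' : w ≤ max w ((B+1)/x) := le_max_left _ _
      have hterm : x * max w ((B+1)/x) - logM0 μ ν (max w ((B+1)/x)) ≤ B :=
        hB ⟨max w ((B+1)/x), rfl⟩
      rw [logM0_of_top (hall _ hw')] at hterm
      have hxw : B + 1 ≤ x * max w ((B+1)/x) := by
        have h2 : (B+1)/x ≤ max w ((B+1)/x) := le_max_right _ _
        have h3 := mul_le_mul_of_nonneg_right h2 hx.le
        rw [div_mul_cancel₀ _ hx.ne'] at h3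
        rw [mul_comm]
        exact h3
      simp only [sub_zero] at hterm
      linarith
    have hcont : Filter.Tendsto (I0 μ ν) (𝓝[>] (0:ℝ)) (𝓝 (Cconst μ ν)) :=
      (hI0d.continuousAt.continuousWithinAt : ContinuousWithinAt (I0 μ ν) (Set.Ioi 0) 0)
    have hzero : Filter.Tendsto (I0 μ ν) (𝓝[>] (0:ℝ)) (𝓝 0) := by
      refine Filter.Tendsto.congr' ?_ tendsto_const_nhds
      filter_upwards [self_mem_nhdsWithin] with x hx
      exact (hx0 x hx).symm
    exact tendsto_nhds_unique hcont hzero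

set_option maxHeartbeats 2000000 in
lemma key (hμν : μ ≪ ν) (hνμ : ν ≪ μ)
    (hInt1 : Integrable (llr' μ ν) μ) (hInt0 : Integrable (llr' μ ν) ν)
    (hD10 : 0 < D10 μ ν) (hD01 : 0 < D01 μ ν)
    {d : ℝ} (hI0d : HasDerivAt (I0 μ ν) d 0) (hI1d : HasDerivAt (I1 μ ν) (-d) 0)
    (hC : 0 < Cconst μ ν) :
    ∀ z ∈ Set.Ioo (0 : ℝ) (Dmin μ ν),
      2 * Cconst μ ν - z ≤ h0 μ ν z ∧ 2 * Cconst μ ν - z ≤ h1 μ ν z := by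
  have hfin : ∀ w, M0 μ ν w ≠ ⊤ := M0_fin_of_C_ne_zero hμν hνμ hI0d hC.ne'
  have hbddIcc : ∀ {x : ℝ}, x ∈ Set.Icc (-(D01 μ ν)) (D10 μ ν) →
      BddAbove (Set.range fun w : ℝ => x*w - logM0 μ ν w) :=
    fun hx => bdd_of_Icc hμν hνμ hInt1 hInt0 hfin hx
  have hconv0 : ConvexOn ℝ {x : ℝ | BddAbove (Set.range fun w : ℝ => x*w - logM0 μ ν w)}
      (I0 μ ν) := convexOn_sup (logM0 μ ν)
  have hDomEq : {x : ℝ | BddAbove (Set.range fun w : ℝ => x*w - logM1 μ ν w)}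
      = {x : ℝ | BddAbove (Set.range fun w : ℝ => x*w - logM0 μ ν w)} := by
    ext x
    exact bddAbove_I1_iff hμν hνμ x
  have hconv1 : ConvexOn ℝ {x : ℝ | BddAbove (Set.range fun w : ℝ => x*w - logM0 μ ν w)}
      (I1 μ ν) := hDomEq ▸ convexOn_sup (logM1 μ ν)
  have h0Dom : BddAbove (Set.range fun w : ℝ => (0:ℝ)*w - logM0 μ ν w) :=
    hbddIcc ⟨by linarith, by linarith⟩
  have hI00 : I0 μ ν 0 = Cconst μ ν := rfl
  have hI10 : I1 μ ν 0 = Cconst μ ν := by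
    rw [I1_eq_I0_sub hμν hνμ h0Dom, hI00, sub_zero]
  have hIoo_sub : Set.Ioo (-(D01 μ ν)) (D10 μ ν) ⊆ Set.Icc (-(D01 μ ν)) (D10 μ ν) :=
    Set.Ioo_subset_Icc_self
  have hEq : I1 μ ν =ᶠ[𝓝 (0:ℝ)] fun x => I0 μ ν x - x := by
    filter_upwards [Ioo_mem_nhds (by linarith : -(D01 μ ν) < 0) hD10] with x hx
    exact I1_eq_I0_sub hμν hνμ (hbddIcc (hIoo_sub hx))
  have hD1' : HasDerivAt (I1 μ ν) (d - 1) 0 :=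
    (hI0d.sub (hasDerivAt_id 0)).congr_of_eventuallyEq hEq
  have hd : d = 1/2 := by
    have h := hI1d.unique hD1'
    linarith
  have tan0 : ∀ {x : ℝ}, BddAbove (Set.range fun w : ℝ => x*w - logM0 μ ν w) →
      Cconst μ ν + x/2 ≤ I0 μ ν x := by
    intro x hx
    have h := tangent_line hconv0 h0Dom hx hI0d
    rw [hI00, hd] at h
    linarith
  have tan1 : ∀ {x : ℝ}, BddAbove (Set.range fun w : ℝ => x*w - logM0 μ ν w) →
      Cconst μ ν - x/2 ≤ I1 μ ν x := by
    intro x hx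
    have h := tangent_line hconv1 h0Dom hx hI1d
    rw [hI10, hd] at h
    linarith
  have hOsub : Set.Ioo (-(D01 μ ν)) (D10 μ ν)
      ⊆ {x : ℝ | BddAbove (Set.range fun w : ℝ => x*w - logM0 μ ν w)} :=
    fun x hx => hbddIcc (hIoo_sub hx)
  have hcont0 : ContinuousOn (I0 μ ν) (Set.Ioo (-(D01 μ ν)) (D10 μ ν)) :=
    (hconv0.subset hOsub (convex_Ioo _ _)).continuousOn isOpen_Ioo
  have hcont1 : ContinuousOn (I1 μ ν) (Set.Ioo (-(D01 μ ν)) (D10 μ ν)) := by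
    refine ((hcont0.sub continuousOn_id).congr fun x hx => ?_)
    exact I1_eq_I0_sub hμν hνμ (hbddIcc (hIoo_sub hx))
  have hI0negA : I0 μ ν (-(D01 μ ν)) = 0 := I0_at_negD01 hInt0 hfin
  have hI0B : I0 μ ν (D10 μ ν) = D10 μ ν := I0_at_D10 hμν hνμ hInt1 hInt0 hfin hD01 hD10
  have hBIcc : (D10 μ ν) ∈ Set.Icc (-(D01 μ ν)) (D10 μ ν) := ⟨by linarith, le_refl _⟩
  have hAIcc : (-(D01 μ ν)) ∈ Set.Icc (-(D01 μ ν)) (D10 μ ν) := ⟨le_refl _, by linarith⟩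
  have hI1B : I1 μ ν (D10 μ ν) = 0 := by
    rw [I1_eq_I0_sub hμν hνμ (hbddIcc hBIcc), hI0B, sub_self]
  have hlogM1neg1 : logM1 μ ν (-1) = 0 := by
    rw [logM1_shift hμν hνμ]
    norm_num
    exact logM0_zero
  rintro z ⟨hz0, hzD⟩
  have hzA : z < D01 μ ν := lt_of_lt_of_le hzD (min_le_left _ _)
  have hzB : z < D10 μ ν := lt_of_lt_of_le hzD (min_le_right _ _)
  set t := z / (z + 2*(Cconst μ ν) + 2) with ht
  have hden : 0 < z + 2*(Cconst μ ν) + 2 := by linarith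
  have htpos : 0 < t := div_pos hz0 hden
  have htlt : t < 1 := by
    rw [ht, div_lt_one hden]
    linarith
  have htC : t * Cconst μ ν < z := by
    rw [ht, div_mul_eq_mul_div, div_lt_iff₀ hden]
    nlinarith
  constructor
  · -- h0 bound
    have hx₁Icc : -((z + D01 μ ν)/2) ∈ Set.Icc (-(D01 μ ν)) (D10 μ ν) :=
      ⟨by linarith, by linarith⟩
    have hx₁Dom := hbddIcc hx₁Icc
    have hx₁b1 : BddAbove (Set.range fun w : ℝ => (-((z + D01 μ ν)/2))*w - logM1 μ ν w) :=
      (bddAbove_I1_iff hμν hνμ _).2 hx₁Dom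
    have hI1x₁ : (z + D01 μ ν)/2 ≤ I1 μ ν (-((z + D01 μ ν)/2)) := by
      have h : (-((z + D01 μ ν)/2))*(-1) - logM1 μ ν (-1)
          ≤ I1 μ ν (-((z + D01 μ ν)/2)) := le_ciSup hx₁b1 (-1)
      rw [hlogM1neg1] at h
      linarith
    have hI1x₂ : I1 μ ν ((1-t) * D10 μ ν) ≤ t * Cconst μ ν := by
      have h := hconv1.2 (hbddIcc hBIcc) h0Dom (by linarith : (0:ℝ) ≤ 1 - t) htpos.le
        (by ring : (1-t) + t = 1)
      simp only [smul_eq_mul, mul_zero, add_zero] at h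
      rw [hI1B, hI10, mul_zero, zero_add] at h
      exact h
    have hx₁x₂ : -((z + D01 μ ν)/2) ≤ (1-t) * D10 μ ν := by nlinarith
    have hIccO : Set.Icc (-((z + D01 μ ν)/2)) ((1-t) * D10 μ ν)
        ⊆ Set.Ioo (-(D01 μ ν)) (D10 μ ν) := by
      intro y hy
      constructor
      · have := hy.1
        linarith
      · have := hy.2
        nlinarith
    have hIVT := intermediate_value_Icc' hx₁x₂ (hcont1.mono hIccO)
    have hzmem : z ∈ Set.Icc (I1 μ ν ((1-t) * D10 μ ν)) (I1 μ ν (-((z + D01 μ ν)/2))) :=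
      ⟨by linarith, by linarith⟩
    obtain ⟨xw, hxwIcc, hxwz⟩ := hIVT hzmem
    have hSDom : ∀ x : ℝ, I1 μ ν x = z →
        BddAbove (Set.range fun w : ℝ => x*w - logM0 μ ν w) := by
      intro x hx
      by_contra hnb
      have hnb1 : ¬ BddAbove (Set.range fun w : ℝ => x*w - logM1 μ ν w) :=
        fun h => hnb ((bddAbove_I1_iff hμν hνμ x).1 h)
      have h1 : I1 μ ν x = 0 := Real.iSup_of_not_bddAbove hnb1
      rw [hx] at h1
      linarith
    have hSlb : ∀ x ∈ {x : ℝ | I1 μ ν x = z}, -(D01 μ ν) ≤ x := by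
      intro x hx
      simp only [Set.mem_setOf_eq] at hx
      by_contra hlt
      push_neg at hlt
      have hb1 : BddAbove (Set.range fun w : ℝ => x*w - logM1 μ ν w) :=
        (bddAbove_I1_iff hμν hνμ x).2 (hSDom x hx)
      have h : x*(-1) - logM1 μ ν (-1) ≤ I1 μ ν x := le_ciSup hb1 (-1)
      rw [hlogM1neg1, hx] at h
      linarith
    have hSne : ({x : ℝ | I1 μ ν x = z}).Nonempty := ⟨xw, hxwz⟩
    have hbddS : BddBelow {x : ℝ | I1 μ ν x = z} := ⟨-(D01 μ ν), hSlb⟩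
    have hxstar_le : sInf {x : ℝ | I1 μ ν x = z} ≤ xw := csInf_le hbddS hxwz
    have hxstar_ge2 : 2*(Cconst μ ν) - 2*z ≤ sInf {x : ℝ | I1 μ ν x = z} := by
      refine le_csInf hSne fun x hx => ?_
      simp only [Set.mem_setOf_eq] at hx
      have h := tan1 (hSDom x hx)
      rw [hx] at h
      linarith
    have hxstar_geA : -(D01 μ ν) ≤ sInf {x : ℝ | I1 μ ν x = z} := le_csInf hSne hSlb
    have hxstarIcc : sInf {x : ℝ | I1 μ ν x = z} ∈ Set.Icc (-(D01 μ ν)) (D10 μ ν) := by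
      refine ⟨hxstar_geA, hxstar_le.trans (hxwIcc.2.trans ?_)⟩
      nlinarith
    have htan := tan0 (hbddIcc hxstarIcc)
    show 2 * Cconst μ ν - z ≤ I0 μ ν (sInf {x : ℝ | I1 μ ν x = z})
    linarith
  · -- h1 bound
    have hx₃Icc : (1-t) * (-(D01 μ ν)) ∈ Set.Icc (-(D01 μ ν)) (D10 μ ν) := by
      constructor
      · nlinarith
      · nlinarith
    have hI0x₃ : I0 μ ν ((1-t) * (-(D01 μ ν))) ≤ t * Cconst μ ν := by
      have h := hconv0.2 (hbddIcc hAIcc) h0Dom (by linarith : (0:ℝ) ≤ 1 - t) htpos.le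
        (by ring : (1-t) + t = 1)
      simp only [smul_eq_mul, mul_zero, add_zero] at h
      rw [hI0negA, hI00, mul_zero, zero_add] at h
      exact h
    have hx₄Icc : (z + D10 μ ν)/2 ∈ Set.Icc (-(D01 μ ν)) (D10 μ ν) :=
      ⟨by linarith, by linarith⟩
    have hI0x₄ : (z + D10 μ ν)/2 ≤ I0 μ ν ((z + D10 μ ν)/2) := by
      have h : ((z + D10 μ ν)/2)*1 - logM0 μ ν 1 ≤ I0 μ ν ((z + D10 μ ν)/2) :=
        le_ciSup (hbddIcc hx₄Icc) 1
      rw [logM0_one hμν hνμ] at h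
      linarith
    have hx₃x₄ : (1-t) * (-(D01 μ ν)) ≤ (z + D10 μ ν)/2 := by nlinarith
    have hIccO : Set.Icc ((1-t) * (-(D01 μ ν))) ((z + D10 μ ν)/2)
        ⊆ Set.Ioo (-(D01 μ ν)) (D10 μ ν) := by
      intro y hy
      constructor
      · have := hy.1
        nlinarith
      · have := hy.2
        linarith
    have hIVT := intermediate_value_Icc hx₃x₄ (hcont0.mono hIccO)
    have hzmem : z ∈ Set.Icc (I0 μ ν ((1-t) * (-(D01 μ ν)))) (I0 μ ν ((z + D10 μ ν)/2)) :=
      ⟨by linarith, by linarith⟩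
    obtain ⟨xw, hxwIcc, hxwz⟩ := hIVT hzmem
    have hTDom : ∀ x : ℝ, I0 μ ν x = z →
        BddAbove (Set.range fun w : ℝ => x*w - logM0 μ ν w) := by
      intro x hx
      by_contra hnb
      have h1 : I0 μ ν x = 0 := Real.iSup_of_not_bddAbove hnb
      rw [hx] at h1
      linarith
    have hTub : ∀ x ∈ {x : ℝ | I0 μ ν x = z}, x ≤ D10 μ ν := by
      intro x hx
      simp only [Set.mem_setOf_eq] at hx
      by_contra hlt
      push_neg at hlt
      have h : x*1 - logM0 μ ν 1 ≤ I0 μ ν x := le_ciSup (hTDom x hx) 1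
      rw [logM0_one hμν hνμ, hx] at h
      linarith
    have hTne : ({x : ℝ | I0 μ ν x = z}).Nonempty := ⟨xw, hxwz⟩
    have hbddT : BddAbove {x : ℝ | I0 μ ν x = z} := ⟨D10 μ ν, hTub⟩
    have hx'_le2 : sSup {x : ℝ | I0 μ ν x = z} ≤ 2*z - 2*(Cconst μ ν) := by
      refine csSup_le hTne fun x hx => ?_
      simp only [Set.mem_setOf_eq] at hx
      have h := tan0 (hTDom x hx)
      rw [hx] at h
      linarith
    have hx'_leB : sSup {x : ℝ | I0 μ ν x = z} ≤ D10 μ ν := csSup_le hTne hTub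
    have hx'_ge : xw ≤ sSup {x : ℝ | I0 μ ν x = z} := le_csSup hbddT hxwz
    have hx'Icc : sSup {x : ℝ | I0 μ ν x = z} ∈ Set.Icc (-(D01 μ ν)) (D10 μ ν) := by
      refine ⟨le_trans ?_ (hxwIcc.1.trans hx'_ge), hx'_leB⟩
      nlinarith
    have htan := tan1 (hbddIcc hx'Icc)
    show 2 * Cconst μ ν - z ≤ I1 μ ν (sSup {x : ℝ | I0 μ ν x = z})
    linarith

end Stmt14Aux

/-- if `I0′(0) = −I1′(0)`, then `h0(z) ≥ 2C − z` and `h1(z) ≥ 2C − z` on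
`(0, D_min)`; consequently `h((m−2n)·C) ≥ m·C` for all integers `m > 2n ≥ 0` with `n ≥ 1`. -/
theorem stmt_14 (μ ν : Measure ℝ) [IsProbabilityMeasure μ] [IsProbabilityMeasure ν]
    (hμν : μ ≪ ν) (hνμ : ν ≪ μ)
    (hdom0 : 0 ∈ interior (dom0 μ ν)) (hdom1 : 0 ∈ interior (dom1 μ ν))
    (hInt1 : Integrable (llr' μ ν) μ) (hInt0 : Integrable (llr' μ ν) ν)
    (hD10 : 0 < D10 μ ν) (hD01 : 0 < D01 μ ν)
    (d : ℝ) (hI0d : HasDerivAt (I0 μ ν) d 0) (hI1d : HasDerivAt (I1 μ ν) (-d) 0) :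
    (∀ z ∈ Set.Ioo (0 : ℝ) (Dmin μ ν),
      2 * Cconst μ ν - z ≤ h0 μ ν z ∧ 2 * Cconst μ ν - z ≤ h1 μ ν z) ∧
    (∀ m n : ℕ, 2 * n < m → 1 ≤ n →
      (m : ℝ) * Cconst μ ν ≤ hFun μ ν m n (((m : ℝ) - 2 * n) * Cconst μ ν)) := by
  classical
  have hCnonneg : (0:ℝ) ≤ Cconst μ ν := Stmt14Aux.I0_nonneg 0
  rcases hCnonneg.eq_or_lt with hC0 | hCpos
  · -- C = 0 : everything is trivial from nonnegativity
    constructor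
    · intro z hz
      have h0nn : (0:ℝ) ≤ h0 μ ν z := Stmt14Aux.I0_nonneg (I1inv μ ν z)
      have h1nn : (0:ℝ) ≤ h1 μ ν z := Stmt14Aux.I1_nonneg hμν hνμ (I0inv μ ν z)
      constructor <;> [skip; skip] <;> rw [← hC0] <;> linarith [hz.1]
    · intro m n hm hn
      have h2n : (2*(n:ℝ)) < m := by exact_mod_cast hm
      have hn1 : (1:ℝ) ≤ (n:ℝ) := by exact_mod_cast hn
      have hmn0 : (0:ℝ) ≤ (m:ℝ) - n := by linarith
      have h0nn : (0:ℝ) ≤ h0 μ ν ((((m:ℝ) - 2*n) * Cconst μ ν) / ((m:ℝ) - n)) :=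
        Stmt14Aux.I0_nonneg _
      have h1nn : (0:ℝ) ≤ h1 μ ν ((((m:ℝ) - 2*n) * Cconst μ ν) / ((m:ℝ) - n)) :=
        Stmt14Aux.I1_nonneg hμν hνμ _
      have hmin : (0:ℝ) ≤ min (h0 μ ν ((((m:ℝ) - 2*n) * Cconst μ ν) / ((m:ℝ) - n)))
          (h1 μ ν ((((m:ℝ) - 2*n) * Cconst μ ν) / ((m:ℝ) - n))) := le_min h0nn h1nn
      have hres : (0:ℝ) ≤ hFun μ ν m n (((m:ℝ) - 2*n) * Cconst μ ν) := mul_nonneg hmn0 hmin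
      have hmC : (m:ℝ) * Cconst μ ν = 0 := by rw [← hC0]; ring
      linarith
  · have hkey := Stmt14Aux.key hμν hνμ hInt1 hInt0 hD10 hD01 hI0d hI1d hCpos
    constructor
    · exact hkey
    · intro m n hm hn
      have h2n : (2*(n:ℝ)) < m := by exact_mod_cast hm
      have hn1 : (1:ℝ) ≤ (n:ℝ) := by exact_mod_cast hn
      have hmn0 : (0:ℝ) < (m:ℝ) - n := by linarith
      set c := (((m:ℝ) - 2*n) * Cconst μ ν) / ((m:ℝ) - n) with hc
      have hc0 : 0 < c := div_pos (mul_pos (by linarith) hCpos) hmn0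
      have hcC : c < Cconst μ ν := by
        rw [hc, div_lt_iff₀ hmn0]
        nlinarith
      have hfin : ∀ w, M0 μ ν w ≠ ⊤ :=
        Stmt14Aux.M0_fin_of_C_ne_zero hμν hνμ hI0d hCpos.ne'
      have hcD : c < Dmin μ ν :=
        lt_of_lt_of_le hcC (Stmt14Aux.C_le_Dmin hμν hνμ hInt1 hInt0 hfin hD01 hD10)
      obtain ⟨hh0, hh1⟩ := hkey c ⟨hc0, hcD⟩
      have hmin : 2 * Cconst μ ν - c ≤ min (h0 μ ν c) (h1 μ ν c) := le_min hh0 hh1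
      have hmul : ((m:ℝ) - n) * (2 * Cconst μ ν - c)
          ≤ ((m:ℝ) - n) * min (h0 μ ν c) (h1 μ ν c) :=
        mul_le_mul_of_nonneg_left hmin hmn0.le
      have hc_mul : ((m:ℝ) - n) * c = ((m:ℝ) - 2*n) * Cconst μ ν := by
        rw [hc]
        field_simp
      show (m : ℝ) * Cconst μ ν ≤ ((m:ℝ) - n) * min (h0 μ ν c) (h1 μ ν c)
      nlinarith
end
end

section
/- Suppose there exists a ∈ ℝ such that μ is the pushforward of ν under the reflection map y ↦ 2a − y (equivalently, μ(a + A) = ν(a − A) for every Borel set A ⊆ ℝ). Then M1(w) = M0(−w) for all w ∈ ℝ, and consequently I1(x) = I0(−x) for all x ∈ ℝ. -/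
open MeasureTheory Filter Set ENNReal

noncomputable section

/-- if `μ` is the pushforward of `ν` under `y ↦ 2a − y`, then
`M1(w) = M0(−w)` for all `w` and `I1(x) = I0(−x)` for all `x`. -/
theorem stmt_15 (μ ν : Measure ℝ) [IsProbabilityMeasure μ] [IsProbabilityMeasure ν]
    (hμν : μ ≪ ν) (hνμ : ν ≪ μ)
    (a : ℝ) (hrefl : μ = ν.map (fun y => 2 * a - y)) :
    (∀ w : ℝ, M1 μ ν w = M0 μ ν (-w)) ∧ (∀ x : ℝ, I1 μ ν x = I0 μ ν (-x)) := by
  classical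
  set σ : ℝ → ℝ := fun y => 2 * a - y with hσ
  have hσinv : Function.Involutive σ := fun y => by simp [hσ]
  have hσmeas : Measurable σ := (measurable_const.sub measurable_id)
  have hE : MeasurableEmbedding σ :=
    (MeasurableEquiv.mk hσinv.toPerm hσmeas hσmeas).measurableEmbedding
  have hνmap : ν = μ.map σ := by
    rw [hrefl, Measure.map_map hσmeas hσmeas]
    simp [hσinv.comp_self]
  -- llr' (σ x) = - llr' x  ν-a.e.
  have h1 : (fun x => μ.rnDeriv ν (σ x)) =ᵐ[μ] ν.rnDeriv μ := by
    have := hE.rnDeriv_map ν μ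
    rwa [← hνmap, ← hrefl] at this
  have h2 : (μ.rnDeriv ν)⁻¹ =ᵐ[μ] ν.rnDeriv μ := Measure.inv_rnDeriv hμν
  have hpos : ∀ᵐ x ∂ν, 0 < μ.rnDeriv ν x := hνμ.ae_le (Measure.rnDeriv_pos hμν)
  have hlt : ∀ᵐ x ∂ν, μ.rnDeriv ν x < ⊤ := Measure.rnDeriv_lt_top μ ν
  have hkey : ∀ᵐ x ∂ν, llr' μ ν (σ x) = - llr' μ ν x := by
    filter_upwards [hνμ.ae_le h1, hνμ.ae_le h2, hpos, hlt] with x hx1 hx2 hx3 hx4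
    have : μ.rnDeriv ν (σ x) = (μ.rnDeriv ν x)⁻¹ := by
      rw [hx1, ← hx2]; rfl
    rw [llr', llr', this, ENNReal.toReal_inv, Real.log_inv]
  have hmeasl : Measurable (llr' μ ν) :=
    Real.measurable_log.comp (Measure.measurable_rnDeriv μ ν).ennreal_toReal
  have hL : ∀ (f : ℝ → ℝ≥0∞), Measurable f →
      ∫⁻ y, f y ∂μ = ∫⁻ y, f (σ y) ∂ν := by
    intro f hf
    rw [hrefl, lintegral_map hf hσmeas]
  have hM : ∀ w : ℝ, M1 μ ν w = M0 μ ν (-w) := by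
    intro w
    rw [M1, M0, hL (fun y => ENNReal.ofReal (Real.exp (w * llr' μ ν y)))
      ((hmeasl.const_mul w).exp.ennreal_ofReal)]
    refine lintegral_congr_ae ?_
    filter_upwards [hkey] with x hx
    rw [hx]; ring_nf
  refine ⟨hM, fun x => ?_⟩
  have hlog : ∀ w : ℝ, logM1 μ ν w = logM0 μ ν (-w) := fun w => by
    rw [logM1, logM0, hM]
  have : I1 μ ν x = ⨆ w : ℝ, ((-x) * (-w) - logM0 μ ν (-w)) := by
    rw [I1]
    congr 1
    funext w
    rw [hlog]; ring_nf
  rw [this, I0]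
  exact neg_surjective.iSup_comp (g := fun w => (-x) * w - logM0 μ ν w)
end
end
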